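/- Let V = ℂ⁶ with standard basis e₁,…,e₆ and let ω₁ = e₁∧e₂∧e₆ − e₁∧e₅∧e₃ + e₂∧e₃∧e₄ ∈ ⋀³V (so ω₁ is not decomposable). Then the linear projection π_{ω₁} : Gr₃V → ℙ((⋀³V)/ℂω₁) is injective. -/

import Mathlib

open ExteriorAlgebra

/-- `u` is a Plücker vector of the `m`-dimensional subspace `Λ`. -/
def IsPluckerVector {V : Type*} [AddCommGroup V] [Module ℂ V] (m : ℕ)
    (Λ : Submodule ℂ V) (u : ExteriorAlgebra ℂ V) : Prop :=
  ∃ v : Fin m → V, Submodule.span ℂ (Set.range v) = Λ ∧ u = ιMulti ℂ m v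

/-- The images of `u` and `u'` in the quotient `(⋀V)/Z` span the same line; this expresses
`π_Z(Λ) = π_Z(Λ')` for subspaces with Plücker vectors `u` and `u'`. -/
def ProjEq {V : Type*} [AddCommGroup V] [Module ℂ V] (Z : Submodule ℂ (ExteriorAlgebra ℂ V))
    (u u' : ExteriorAlgebra ℂ V) : Prop :=
  Submodule.span ℂ {Z.mkQ u} = Submodule.span ℂ {Z.mkQ u'}

/-- The standard basis of `ℂ⁶`. -/
noncomputable def e : Fin 6 → (Fin 6 → ℂ) := fun i => Pi.single i 1

/-- `ω₁ = e₁∧e₂∧e₆ − e₁∧e₅∧e₃ + e₂∧e₃∧e₄`. -/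
noncomputable def ω₁ : ExteriorAlgebra ℂ (Fin 6 → ℂ) :=
  ι ℂ (e 0) * ι ℂ (e 1) * ι ℂ (e 5) - ι ℂ (e 0) * ι ℂ (e 4) * ι ℂ (e 2)
    + ι ℂ (e 1) * ι ℂ (e 2) * ι ℂ (e 3)

/-!
If `π_{ω₁}(Λ) = π_{ω₁}(Λ')`, the Plücker vectors satisfy `u' = c • u + b • ω₁` with `c ≠ 0`.
If `b = 0` then `Λ = Λ'`, because a subspace with Plücker vector `u` is `{x | x ∧ u = 0}`.
If `b ≠ 0`, then for every `x ∈ Λ` the 4-vector `x ∧ ω₁ = b⁻¹ • (x ∧ u')` is decomposable, so it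
satisfies the three-term Plücker relations; three of them, evaluated at `x ∧ ω₁`, read
`x₃² = x₄² = x₅² = 0` (coordinates indexed from `0`, as in `e`). Hence `Λ ⊆ ⟨e₀, e₁, e₂⟩`, so
`Λ = ⟨e₀, e₁, e₂⟩`, and by symmetry either `Λ' = Λ` or `Λ' = ⟨e₀, e₁, e₂⟩` as well.
-/

theorem ι_mul_ιMulti_eq_ιMulti_cons {R M : Type*} [CommRing R] [AddCommGroup M] [Module R M]
    {n : ℕ} (x : M) (v : Fin n → M) : ι R x * ιMulti R n v = ιMulti R (n + 1) (Fin.cons x v) := by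
  rw [ιMulti_succ_apply]
  rfl

section Field

variable {K E : Type*} [Field K] [AddCommGroup E] [Module K E]

theorem ιMulti_ne_zero_of_linearIndependent {n : ℕ} {v : Fin n → E}
    (hv : LinearIndependent K v) : ιMulti K n v ≠ 0 := by
  have h := (exteriorPower.ιMulti_family_linearIndependent_field (n := n) hv).ne_zero
    (Set.powersetCard.ofFinEmbEquiv (OrderIso.refl (Fin n)).toOrderEmbedding)
  simp only [exteriorPower.ιMulti_family, Equiv.symm_apply_apply] at h
  exact fun h0 => h (Subtype.ext h0)

theorem ιMulti_eq_zero_iff {n : ℕ} (v : Fin n → E) :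
    ιMulti K n v = 0 ↔ ¬LinearIndependent K v :=
  ⟨fun h hv => ιMulti_ne_zero_of_linearIndependent hv h, (ιMulti K n).map_linearDependent v⟩

theorem ι_mul_ιMulti_eq_zero_iff {n : ℕ} {v : Fin n → E} (hv : LinearIndependent K v) (x : E) :
    ι K x * ιMulti K n v = 0 ↔ x ∈ Submodule.span K (Set.range v) := by
  rw [ι_mul_ιMulti_eq_ιMulti_cons, ιMulti_eq_zero_iff, linearIndependent_finCons, not_and,
    not_not]
  exact ⟨fun h => h hv, fun h _ => h⟩

theorem linearIndependent_of_finrank_span_eq {n : ℕ} {v : Fin n → E}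
    (h : Module.finrank K (Submodule.span K (Set.range v)) = n) : LinearIndependent K v :=
  linearIndependent_iff_card_eq_finrank_span.2 (by rw [Set.finrank, h, Fintype.card_fin])

theorem span_eq_of_ιMulti_eq_smul {n : ℕ} {v v' : Fin n → E} (hv : LinearIndependent K v)
    (hv' : LinearIndependent K v') {c : K} (hc : c ≠ 0) (h : ιMulti K n v' = c • ιMulti K n v) :
    Submodule.span K (Set.range v) = Submodule.span K (Set.range v') := by
  ext x
  rw [← ι_mul_ιMulti_eq_zero_iff hv, ← ι_mul_ιMulti_eq_zero_iff hv', h, mul_smul_comm,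
    smul_eq_zero, or_iff_right hc]

end Field

theorem ProjEq.exists_eq_smul_add_smul {V : Type*} [AddCommGroup V] [Module ℂ V]
    {ω u u' : ExteriorAlgebra ℂ V} (h : ProjEq (Submodule.span ℂ {ω}) u u') :
    ∃ c b : ℂ, c ≠ 0 ∧ u' = c • u + b • ω := by
  obtain ⟨z, hz⟩ := Submodule.span_singleton_eq_span_singleton.1 h
  have hmem : u' - (z : ℂ) • u ∈ Submodule.span ℂ {ω} := by
    rw [← Submodule.ker_mkQ (Submodule.span ℂ {ω}), LinearMap.mem_ker, map_sub, map_smul, ← hz,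
      Units.smul_def, sub_self]
  obtain ⟨b, hb⟩ := Submodule.mem_span_singleton.1 hmem
  exact ⟨z, b, z.ne_zero, by rw [hb, add_sub_cancel]⟩

section Plucker

variable {R σ : Type*} [CommRing R]

noncomputable def pluckerCoord {k : ℕ} (I : Fin k → σ) : ExteriorAlgebra R (σ → R) →ₗ[R] R :=
  liftAlternating (Pi.single k (Matrix.detRowAlternating.compLinearMap (LinearMap.funLeft R R I)))

theorem pluckerCoord_ιMulti {k : ℕ} (I : Fin k → σ) (y : Fin k → σ → R) :
    pluckerCoord I (ιMulti R k y) = (Matrix.of fun i j => y i (I j)).det := by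
  rw [pluckerCoord, liftAlternating_apply_ιMulti, Pi.single_eq_same]
  rfl

theorem pluckerCoord_ι_mul_ιMulti (p q r s : σ) (x : σ → R) (w : Fin 3 → σ → R) :
    pluckerCoord ![p, q, r, s] (ι R x * ιMulti R 3 w) =
      x p * pluckerCoord ![q, r, s] (ιMulti R 3 w) - x q * pluckerCoord ![p, r, s] (ιMulti R 3 w)
        + x r * pluckerCoord ![p, q, s] (ιMulti R 3 w)
        - x s * pluckerCoord ![p, q, r] (ιMulti R 3 w) := by
  rw [ι_mul_ιMulti_eq_ιMulti_cons]
  simp only [pluckerCoord_ιMulti]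
  rw [Matrix.det_succ_row_zero, Fin.sum_univ_four]
  have minor : ∀ (j : Fin 4) (J : Fin 3 → σ), ![p, q, r, s] ∘ j.succAbove = J →
      ((Matrix.of fun i k => (Fin.cons x w : Fin 4 → σ → R) i (![p, q, r, s] k)).submatrix
        Fin.succ j.succAbove).det = (Matrix.of fun i k => w i (J k)).det := by
    rintro j J rfl
    rfl
  rw [minor 0 ![q, r, s] (by ext k; fin_cases k <;> rfl),
    minor 1 ![p, r, s] (by ext k; fin_cases k <;> rfl),
    minor 2 ![p, q, s] (by ext k; fin_cases k <;> rfl),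
    minor 3 ![p, q, r] (by ext k; fin_cases k <;> rfl)]
  simp
  ring

theorem det_three_term (s t a b c d : Fin 4 → R) :
    (Matrix.of ![s, t, a, b]).det * (Matrix.of ![s, t, c, d]).det
      - (Matrix.of ![s, t, a, c]).det * (Matrix.of ![s, t, b, d]).det
      + (Matrix.of ![s, t, a, d]).det * (Matrix.of ![s, t, b, c]).det = 0 := by
  simp [Matrix.det_succ_row_zero, Fin.sum_univ_succ, Fin.succAbove]
  ring

noncomputable def pluckerRel (ξ : ExteriorAlgebra R (σ → R)) (s t a b c d : σ) : R :=
  pluckerCoord ![s, t, a, b] ξ * pluckerCoord ![s, t, c, d] ξ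
    - pluckerCoord ![s, t, a, c] ξ * pluckerCoord ![s, t, b, d] ξ
    + pluckerCoord ![s, t, a, d] ξ * pluckerCoord ![s, t, b, c] ξ

theorem pluckerRel_smul (r : R) (ξ : ExteriorAlgebra R (σ → R)) (s t a b c d : σ) :
    pluckerRel (r • ξ) s t a b c d = r ^ 2 * pluckerRel ξ s t a b c d := by
  simp only [pluckerRel, map_smul, smul_eq_mul]
  ring

theorem pluckerRel_ιMulti (y : Fin 4 → σ → R) (s t a b c d : σ) :
    pluckerRel (ιMulti R 4 y) s t a b c d = 0 := by
  have columns : ∀ p q r w : σ, (Matrix.of fun i j => y i (![p, q, r, w] j)).det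
      = (Matrix.of ![fun i => y i p, fun i => y i q, fun i => y i r, fun i => y i w]).det := by
    intro p q r w
    rw [← Matrix.det_transpose]
    congr 1
    ext i j
    fin_cases i <;> rfl
  simp only [pluckerRel, pluckerCoord_ιMulti, columns]
  exact det_three_term _ _ _ _ _ _

end Plucker

theorem ω₁_eq : ω₁ = ιMulti ℂ 3 ![e 0, e 1, e 5] - ιMulti ℂ 3 ![e 0, e 4, e 2]
    + ιMulti ℂ 3 ![e 1, e 2, e 3] := by
  simp [ω₁, ιMulti_apply, mul_assoc]

theorem pluckerRel_ι_mul_ω₁ (x : Fin 6 → ℂ) :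
    pluckerRel (ι ℂ x * ω₁) 0 3 1 5 2 4 = x 3 ^ 2 ∧ pluckerRel (ι ℂ x * ω₁) 1 4 5 0 2 3 = x 4 ^ 2
      ∧ pluckerRel (ι ℂ x * ω₁) 2 5 0 4 1 3 = x 5 ^ 2 := by
  simp only [pluckerRel, ω₁_eq, mul_add, mul_sub, map_add, map_sub, pluckerCoord_ι_mul_ιMulti,
    pluckerCoord_ιMulti, Matrix.det_fin_three]
  simp [e, Pi.single_apply, sq]

noncomputable def E₀₁₂ : Submodule ℂ (Fin 6 → ℂ) := Submodule.span ℂ (Set.range ![e 0, e 1, e 2])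

theorem finrank_E₀₁₂_le : Module.finrank ℂ E₀₁₂ ≤ 3 :=
  finrank_range_le_card _

theorem mem_E₀₁₂ {x : Fin 6 → ℂ} (h3 : x 3 = 0) (h4 : x 4 = 0) (h5 : x 5 = 0) : x ∈ E₀₁₂ := by
  refine (Submodule.mem_span_range_iff_exists_fun ℂ).2 ⟨![x 0, x 1, x 2], ?_⟩
  ext j
  fin_cases j <;> simp [Fin.sum_univ_three, e, h3, h4, h5]

theorem mem_E₀₁₂_of_ιMulti_eq_smul {x : Fin 6 → ℂ} {y : Fin 4 → Fin 6 → ℂ} {t : ℂ} (ht : t ≠ 0)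
    (h : ιMulti ℂ 4 y = t • (ι ℂ x * ω₁)) : x ∈ E₀₁₂ := by
  obtain ⟨h3, h4, h5⟩ := pluckerRel_ι_mul_ω₁ x
  have vanish : ∀ s s' a b c d, t ^ 2 * pluckerRel (ι ℂ x * ω₁) s s' a b c d = 0 :=
    fun s s' a b c d => by rw [← pluckerRel_smul, ← h, pluckerRel_ιMulti]
  refine mem_E₀₁₂ ?_ ?_ ?_
  · simpa [h3, ht] using vanish 0 3 1 5 2 4
  · simpa [h4, ht] using vanish 1 4 5 0 2 3
  · simpa [h5, ht] using vanish 2 5 0 4 1 3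

theorem span_eq_E₀₁₂_of_ιMulti_eq {v v' : Fin 3 → Fin 6 → ℂ} (hv : LinearIndependent ℂ v) {c b : ℂ}
    (hb : b ≠ 0) (h : ιMulti ℂ 3 v' = c • ιMulti ℂ 3 v + b • ω₁) :
    Submodule.span ℂ (Set.range v) = E₀₁₂ := by
  refine Submodule.eq_of_le_of_finrank_le (fun x hx => ?_) ?_
  · have hxv : ι ℂ x * ιMulti ℂ 3 v = 0 := (ι_mul_ιMulti_eq_zero_iff hv x).2 hx
    refine mem_E₀₁₂_of_ιMulti_eq_smul (y := Fin.cons x v') hb ?_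
    rw [← ι_mul_ιMulti_eq_ιMulti_cons, h, mul_add, mul_smul_comm, mul_smul_comm, hxv, smul_zero,
      zero_add]
  · rw [finrank_span_eq_card hv, Fintype.card_fin]
    exact finrank_E₀₁₂_le

theorem span_eq_or_eq_E₀₁₂ {v v' : Fin 3 → Fin 6 → ℂ} (hv : LinearIndependent ℂ v)
    (hv' : LinearIndependent ℂ v')
    (h : ProjEq (Submodule.span ℂ {ω₁}) (ιMulti ℂ 3 v) (ιMulti ℂ 3 v')) :
    Submodule.span ℂ (Set.range v) = Submodule.span ℂ (Set.range v') ∨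
      Submodule.span ℂ (Set.range v) = E₀₁₂ := by
  obtain ⟨c, b, hc, hcb⟩ := h.exists_eq_smul_add_smul
  rcases eq_or_ne b 0 with rfl | hb
  · rw [zero_smul, add_zero] at hcb
    exact Or.inl (span_eq_of_ιMulti_eq_smul hv hv' hc hcb)
  · exact Or.inr (span_eq_E₀₁₂_of_ιMulti_eq hv hb hcb)

theorem stmt4 (Λ Λ' : Submodule ℂ (Fin 6 → ℂ))
    (hΛ : Module.finrank ℂ Λ = 3) (hΛ' : Module.finrank ℂ Λ' = 3)
    (u u' : ExteriorAlgebra ℂ (Fin 6 → ℂ))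
    (hu : IsPluckerVector 3 Λ u) (hu' : IsPluckerVector 3 Λ' u')
    (h : ProjEq (Submodule.span ℂ {ω₁}) u u') :
    Λ = Λ' := by
  obtain ⟨v, rfl, rfl⟩ := hu
  obtain ⟨v', rfl, rfl⟩ := hu'
  have hv := linearIndependent_of_finrank_span_eq hΛ
  have hv' := linearIndependent_of_finrank_span_eq hΛ'
  rcases span_eq_or_eq_E₀₁₂ hv hv' h with hΛΛ' | hΛE
  · exact hΛΛ'
  rcases span_eq_or_eq_E₀₁₂ hv' hv (Eq.symm h) with hΛ'Λ | hΛ'E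
  · exact hΛ'Λ.symm
  · exact hΛE.trans hΛ'E.symm
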